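/- In the mixed community setting with community sizes d_1 > d_2 ≥ ... ≥ d_m summing to N, the probability of error of the Distinct Samples Maximization algorithm after t uniform samples with replacement satisfies P_e ≤ C(d_1, d_2) · (1 − (d_1 − d_2)/N)^t. -/
import Mathlib
set_option maxHeartbeats 1000000


/-- Mixed community setting: a population `Fin N` is partitioned into `m` communities of
sizes `d 0 > d 1 ≥ ... ≥ d (m-1)`. The Distinct Samples Maximization algorithm draws `t`
uniform samples with replacement, counts the distinct individuals seen from each
community, and outputs a community with the maximal count (any tie-breaking rule `sel`
attaining the maximum). Its error probability satisfies
`P_e ≤ C(d₁,d₂)·(1 − (d₁−d₂)/N)^t`. -/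
theorem stmt6 (N m t : ℕ) [NeZero N] (hm : 2 ≤ m)
    (comm : Fin N → Fin m) (d : Fin m → ℕ)
    (hd : ∀ j, d j = (Finset.univ.filter (fun x => comm x = j)).card)
    (hord : ∀ j k : Fin m, j ≤ k → d k ≤ d j)
    (h12 : d ⟨1, by omega⟩ < d ⟨0, by omega⟩)
    (sel : (Fin m → ℕ) → Fin m)
    (hsel : ∀ f : Fin m → ℕ, ∀ j, f j ≤ f (sel f)) :
    (((PMF.uniformOfFintype (Fin t → Fin N)).toMeasure)
        {ω | sel (fun j =>
            (Finset.univ.filter (fun x => comm x = j ∧ ∃ i, ω i = x)).card)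
            ≠ ⟨0, by omega⟩}).toReal ≤
      (Nat.choose (d ⟨0, by omega⟩) (d ⟨1, by omega⟩) : ℝ) *
        (1 - ((d ⟨0, by omega⟩ : ℝ) - (d ⟨1, by omega⟩ : ℝ)) / N) ^ t := by
  classical
  set i0 : Fin m := ⟨0, by omega⟩ with hi0
  set i1 : Fin m := ⟨1, by omega⟩ with hi1
  set d1 := d i0 with hd1
  set d2 := d i1 with hd2
  have h21 : d2 ≤ d1 := le_of_lt h12
  set k := d1 - d2 with hk
  set C0 : Finset (Fin N) := Finset.univ.filter (fun x => comm x = i0) with hC0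
  have hC0card : C0.card = d1 := (hd i0).symm
  have hd1N : d1 ≤ N := by
    rw [← hC0card]
    simpa using Finset.card_le_univ C0
  have hkN : k ≤ N := le_trans (Nat.sub_le _ _) hd1N
  set P : (Fin t → Fin N) → Prop := fun ω => sel (fun j =>
      (Finset.univ.filter (fun x => comm x = j ∧ ∃ i, ω i = x)).card) ≠ i0 with hP
  set E : Finset (Fin t → Fin N) := Finset.univ.filter P with hE
  -- key combinatorial step
  have key : ∀ ω ∈ E, ∃ T ∈ Finset.powersetCard k C0, ∀ i, ω i ∉ T := by
    intro ω hω
    have hωP : P ω := (Finset.mem_filter.1 hω).2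
    set f : Fin m → ℕ := fun j =>
      (Finset.univ.filter (fun x => comm x = j ∧ ∃ i, ω i = x)).card with hf
    have hfj : ∀ j, f j ≤ d j := by
      intro j
      rw [hd j]
      apply Finset.card_le_card
      intro x hx
      simp only [Finset.mem_filter] at hx ⊢
      exact ⟨hx.1, hx.2.1⟩
    have hself : i1 ≤ sel f := by
      have : sel f ≠ i0 := hωP
      have : (sel f).val ≠ 0 := by
        intro h
        exact this (Fin.ext h)
      rw [Fin.le_def]
      simpa [hi1] using Nat.one_le_iff_ne_zero.2 this
    have hf0 : f i0 ≤ d2 := by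
      calc f i0 ≤ f (sel f) := hsel f i0
        _ ≤ d (sel f) := hfj _
        _ ≤ d2 := hord i1 (sel f) hself
    set S0 : Finset (Fin N) :=
      Finset.univ.filter (fun x => comm x = i0 ∧ ∃ i, ω i = x) with hS0
    have hS0sub : S0 ⊆ C0 := by
      intro x hx
      simp only [hS0, hC0, Finset.mem_filter] at hx ⊢
      exact ⟨hx.1, hx.2.1⟩
    have hsd : k ≤ (C0 \ S0).card := by
      rw [Finset.card_sdiff_of_subset hS0sub, hC0card]
      have : S0.card ≤ d2 := hf0
      omega
    obtain ⟨T, hTsub, hTcard⟩ := Finset.exists_subset_card_eq hsd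
    refine ⟨T, Finset.mem_powersetCard.2 ⟨hTsub.trans (Finset.sdiff_subset), hTcard⟩, ?_⟩
    intro i hiT
    have hmem := hTsub hiT
    rw [Finset.mem_sdiff] at hmem
    obtain ⟨hmC0, hnS0⟩ := hmem
    apply hnS0
    simp only [hS0, Finset.mem_filter, Finset.mem_univ, true_and]
    simp only [hC0, Finset.mem_filter, Finset.mem_univ, true_and] at hmC0
    exact ⟨hmC0, ⟨i, rfl⟩⟩
  have hEsub : E ⊆ (Finset.powersetCard k C0).biUnion
      (fun T => Finset.univ.filter (fun ω => ∀ i, ω i ∉ T)) := by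
    intro ω hω
    obtain ⟨T, hT, hmiss⟩ := key ω hω
    exact Finset.mem_biUnion.2 ⟨T, hT, Finset.mem_filter.2 ⟨Finset.mem_univ _, hmiss⟩⟩
  have hmisscard : ∀ T ∈ Finset.powersetCard k C0,
      (Finset.univ.filter (fun ω : Fin t → Fin N => ∀ i, ω i ∉ T)).card = (N - k) ^ t := by
    intro T hT
    have hTcard : T.card = k := (Finset.mem_powersetCard.1 hT).2
    have : Finset.univ.filter (fun ω : Fin t → Fin N => ∀ i, ω i ∉ T)
        = Fintype.piFinset (fun _ : Fin t => Tᶜ) := by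
      ext ω
      simp [Fintype.mem_piFinset]
    rw [this, Fintype.card_piFinset]
    simp [Finset.card_compl, hTcard]
  have hEcard : E.card ≤ d1.choose d2 * (N - k) ^ t := by
    have h1 : E.card ≤ ((Finset.powersetCard k C0).biUnion
        (fun T => Finset.univ.filter (fun ω : Fin t → Fin N => ∀ i, ω i ∉ T))).card :=
      Finset.card_le_card hEsub
    have h2 := Finset.card_biUnion_le (s := Finset.powersetCard k C0)
      (t := fun T => Finset.univ.filter (fun ω : Fin t → Fin N => ∀ i, ω i ∉ T))
    have h3 : ∑ T ∈ Finset.powersetCard k C0,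
        (Finset.univ.filter (fun ω : Fin t → Fin N => ∀ i, ω i ∉ T)).card
        = d1.choose d2 * (N - k) ^ t := by
      rw [Finset.sum_congr rfl hmisscard, Finset.sum_const, smul_eq_mul,
        Finset.card_powersetCard, hC0card, hk, Nat.choose_symm h21]
    exact le_trans h1 (le_trans h2 (le_of_eq h3))
  -- compute the measure
  have hNt : (0 : ℝ) < (N : ℝ) ^ t := by
    have : 0 < N := Nat.pos_of_ne_zero (NeZero.ne N)
    positivity
  have hset : {ω : Fin t → Fin N | sel (fun j =>
      (Finset.univ.filter (fun x => comm x = j ∧ ∃ i, ω i = x)).card) ≠ i0} = ↑E := by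
    ext ω
    simp [hE, hP]
  have hmeas : (((PMF.uniformOfFintype (Fin t → Fin N)).toMeasure)
      {ω | sel (fun j =>
          (Finset.univ.filter (fun x => comm x = j ∧ ∃ i, ω i = x)).card) ≠ i0}).toReal
      = (E.card : ℝ) / (N : ℝ) ^ t := by
    rw [hset, PMF.toMeasure_uniformOfFintype_apply _ ((Set.toFinite _).measurableSet)]
    rw [ENNReal.toReal_div]
    simp only [← Nat.card_eq_fintype_card]
    have hc1 : Nat.card ↑(↑E : Set (Fin t → Fin N)) = E.card := by
      rw [Nat.card_coe_set_eq, Set.ncard_coe_finset]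
    have hc2 : Nat.card (Fin t → Fin N) = N ^ t := by
      simp [Nat.card_eq_fintype_card]
    rw [hc1, hc2, ENNReal.toReal_natCast, ENNReal.toReal_natCast]
    push_cast
    ring
  rw [hmeas]
  have hrhs : (1 - ((d1 : ℝ) - (d2 : ℝ)) / N) = ((N - k : ℕ) : ℝ) / N := by
    have h1 : ((d1 : ℝ) - (d2 : ℝ)) = (k : ℝ) := by
      rw [hk]
      push_cast [Nat.cast_sub h21]
      ring
    have h2 : ((N - k : ℕ) : ℝ) = (N : ℝ) - (k : ℝ) := by
      push_cast [Nat.cast_sub hkN]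
      ring
    have hN0 : (N:ℝ) ≠ 0 := Nat.cast_ne_zero.2 (NeZero.ne N)
    rw [h1, h2, sub_div, div_self hN0]
  rw [hrhs, div_pow, ← mul_div_assoc]
  rw [div_le_div_iff₀ hNt hNt]
  have : (E.card : ℝ) ≤ (d1.choose d2 : ℝ) * ((N - k : ℕ) : ℝ) ^ t := by
    calc (E.card : ℝ) ≤ ((d1.choose d2 * (N - k) ^ t : ℕ) : ℝ) := by exact_mod_cast hEcard
      _ = (d1.choose d2 : ℝ) * ((N - k : ℕ) : ℝ) ^ t := by push_cast; ring
  nlinarith [hNt, this]
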